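/- arXiv:2605.25779 — 7 statements merged into one kernel-verified Lean document; each statement's English description precedes it below -/
import Mathlib

section
/- Let 0 ≤ a < 1 and let f(z) = (z + a)/(1 + a z). If a real constant L satisfies s_𝕌(f(z₁), f(z₂)) ≤ L · s_𝕌(z₁, z₂) for all z₁, z₂ ∈ 𝕌, then L ≥ 1 + a; that is, the constant 1 + a in the distortion inequality is the best possible. -/
open Complex

/-- The triangular ratio metric in the unit disk `𝕌 = {z : ℂ | |z| < 1}`:
`s_𝕌(z₁, z₂) = |z₁ - z₂| / inf_{|w| = 1} (|z₁ - w| + |w - z₂|)`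
(for `z₁ = z₂` the numerator vanishes, so the value is `0`). -/
noncomputable def sU (z₁ z₂ : ℂ) : ℝ :=
  ‖z₁ - z₂‖ /
    sInf ((fun w => ‖z₁ - w‖ + ‖w - z₂‖) ''
      {w : ℂ | ‖w‖ = 1})

/-!
Test the inequality on the symmetric pairs `z₁ = x`, `z₂ = -x` with `0 < x < 1`. For real points
`p, q ≤ 1` with `p + q ≥ 0` the infimum over the unit circle is attained at `w = 1`, so
`s_𝕌(p, q) = |p - q| / (2 - p - q)`. This gives `s_𝕌(x, -x) = x` and
`s_𝕌(f x, f (-x)) = (1 + a) x / (1 + a x²)`, hence `1 + a ≤ L (1 + a x²)`; let `x → 0⁺`.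
-/

open Filter Topology Set

lemma two_mul_norm_sub_norm_add_le {E : Type*} [SeminormedAddCommGroup E] [NormedSpace ℝ E]
    (x y w : E) : 2 * ‖w‖ - ‖x + y‖ ≤ ‖x - w‖ + ‖w - y‖ :=
  calc 2 * ‖w‖ - ‖x + y‖ = ‖(2 : ℝ) • w‖ - ‖x + y‖ := by rw [norm_smul, Real.norm_two]
    _ ≤ ‖(2 : ℝ) • w - (x + y)‖ := norm_sub_norm_le _ _
    _ = ‖(w - x) + (w - y)‖ := by rw [two_smul]; abel_nf
    _ ≤ ‖x - w‖ + ‖w - y‖ := by rw [← norm_neg (x - w), neg_sub]; exact norm_add_le _ _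

lemma isLeast_image_norm_sub_add_norm_sub_ofReal {p q : ℝ} (hpq : 0 ≤ p + q) (hp : p ≤ 1)
    (hq : q ≤ 1) :
    IsLeast ((fun w => ‖(p : ℂ) - w‖ + ‖w - q‖) '' {w : ℂ | ‖w‖ = 1}) (2 - p - q) := by
  refine ⟨⟨1, by simp, ?_⟩, ?_⟩
  · dsimp only
    rw [← ofReal_one, ← ofReal_sub, ← ofReal_sub, norm_real, norm_real, Real.norm_eq_abs,
      Real.norm_eq_abs, abs_of_nonpos (by linarith), abs_of_nonneg (by linarith)]
    ring
  · rintro _ ⟨w, hw, rfl⟩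
    have h := two_mul_norm_sub_norm_add_le (p : ℂ) q w
    rw [hw, ← ofReal_add, norm_real, Real.norm_eq_abs, abs_of_nonneg hpq] at h
    linarith

lemma sU_ofReal {p q : ℝ} (hpq : 0 ≤ p + q) (hp : p ≤ 1) (hq : q ≤ 1) :
    sU p q = |p - q| / (2 - p - q) := by
  rw [sU, (isLeast_image_norm_sub_add_norm_sub_ofReal hpq hp hq).csInf_eq, ← ofReal_sub, norm_real,
    Real.norm_eq_abs]

lemma sU_ofReal_neg_self {x : ℝ} (hx0 : 0 ≤ x) (hx1 : x ≤ 1) : sU x (-x) = x := by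
  rw [← ofReal_neg, sU_ofReal (by linarith) hx1 (by linarith), sub_neg_eq_add,
    abs_of_nonneg (by linarith)]
  field_simp
  ring

lemma sU_moebius_ofReal_neg_self {a x : ℝ} (ha0 : 0 ≤ a) (ha1 : a < 1) (hx0 : 0 < x)
    (hx1 : x < 1) :
    sU ((x + a) / (1 + a * x)) ((-x + a) / (1 + a * -x)) = x * (1 + a) / (1 + a * x ^ 2) := by
  have hax : a * x < 1 := by nlinarith
  have hd1 : 0 < 1 + a * x := by positivity
  have hd2 : 0 < 1 - a * x := by linarith
  have hD : 0 < (1 + a * x) * (1 - a * x) := mul_pos hd1 hd2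
  have hfx : ((x : ℂ) + a) / (1 + a * x) = ((x + a) / (1 + a * x) : ℝ) := by push_cast; rfl
  have hfnx : (-(x : ℂ) + a) / (1 + a * -x) = ((a - x) / (1 - a * x) : ℝ) := by push_cast; ring_nf
  rw [hfx, hfnx]
  set p := (x + a) / (1 + a * x) with hp
  set q := (a - x) / (1 - a * x) with hq
  have hsum : p + q = 2 * a * (1 - x ^ 2) / ((1 + a * x) * (1 - a * x)) := by
    rw [hp, hq, div_add_div _ _ hd1.ne' hd2.ne']; ring
  have hdiff : p - q = 2 * x * (1 - a ^ 2) / ((1 + a * x) * (1 - a * x)) := by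
    rw [hp, hq, div_sub_div _ _ hd1.ne' hd2.ne']; ring
  have hgap : 2 - p - q = 2 * (1 - a) * (1 + a * x ^ 2) / ((1 + a * x) * (1 - a * x)) := by
    rw [sub_sub, hsum, eq_div_iff hD.ne', sub_mul, div_mul_cancel₀ _ hD.ne']; ring
  have hp1 : p ≤ 1 := by rw [hp, div_le_one hd1]; nlinarith
  have hq1 : q ≤ 1 := by rw [hq, div_le_one hd2]; nlinarith
  have hsum0 : 0 ≤ p + q := by
    rw [hsum]
    have : 0 ≤ 1 - x ^ 2 := by nlinarith
    positivity
  have hdiff0 : 0 ≤ p - q := by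
    rw [hdiff]
    have : 0 ≤ 1 - a ^ 2 := by nlinarith
    positivity
  rw [sU_ofReal hsum0 hp1 hq1, abs_of_nonneg hdiff0, hdiff, hgap, div_div_div_cancel_right₀ hD.ne']
  have h1a : 1 - a ≠ 0 := (sub_pos.2 ha1).ne'
  field_simp
  ring

theorem moebius_distortion_sharp (a : ℝ) (ha0 : 0 ≤ a) (ha1 : a < 1)
    (f : ℂ → ℂ) (hf : ∀ z : ℂ, f z = (z + (a : ℂ)) / (1 + (a : ℂ) * z))
    (L : ℝ)
    (hL : ∀ z₁ z₂ : ℂ, ‖z₁‖ < 1 → ‖z₂‖ < 1 →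
      sU (f z₁) (f z₂) ≤ L * sU z₁ z₂) :
    1 + a ≤ L := by
  have hbound : ∀ x ∈ Ioo (0 : ℝ) 1, 1 + a ≤ L * (1 + a * x ^ 2) := by
    rintro x ⟨hx0, hx1⟩
    have hx : ‖(x : ℂ)‖ < 1 := by rwa [norm_real, Real.norm_of_nonneg hx0.le]
    have h := hL x (-x) hx (by rwa [norm_neg])
    rw [hf, hf, sU_moebius_ofReal_neg_self ha0 ha1 hx0 hx1, sU_ofReal_neg_self hx0.le hx1.le,
      div_le_iff₀ (by positivity), mul_comm x, mul_right_comm L] at h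
    exact le_of_mul_le_mul_right h hx0
  have hlim : Tendsto (fun x : ℝ => L * (1 + a * x ^ 2)) (𝓝[>] 0) (𝓝 L) := by
    have : Continuous fun x : ℝ => L * (1 + a * x ^ 2) := by fun_prop
    simpa using (this.tendsto 0).mono_left nhdsWithin_le_nhds
  exact ge_of_tendsto hlim (eventually_of_mem (Ioo_mem_nhdsGT one_pos) hbound)
end

section
/- For all z₁, z₂ ∈ 𝕌 with z₁ ≠ z₂, one has s_𝕌(z₁, z₂) = sup_{θ ∈ ℝ} |z₁ − z₂| / |2 − e^{−iθ} z₁ − e^{iθ} conj(z₂)|; equivalently, inf_{|w| = 1} (|z₁ − w| + |w − z₂|) = inf_{θ ∈ ℝ} |2 − e^{−iθ} z₁ − e^{iθ} conj(z₂)|. -/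
/-!
Write `R_c z = 2c - c² z̄` for the reflection of `z` in the tangent line to the unit circle at
`c`; then `|2 - c̄ z₁ - c z̄₂| = |z₁ - R_c z₂|`. For `w` on the circle the reflection fixes `w`, so
`|z₁ - R_w z₂| ≤ |z₁ - w| + |w - z₂|`. Conversely, `z₁` and `R_c z₂` lie on opposite sides of the
tangent line, the segment between them crosses it at a point `p` with
`|z₁ - p| + |p - z₂| = |z₁ - R_c z₂|`, and the radial projection of `p` onto the circle is closer
to every point of the closed disk. Both infima therefore agree, and they are at least
`2 - |z₁| - |z₂| > 0`, so the supremum of the quotients is the quotient by the infimum.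
-/

open Complex

open Metric RealInnerProductSpace ComplexConjugate

lemma div_iInf_eq_iSup_div {ι : Sort*} {f : ι → ℝ} {c : ℝ} (hc : 0 ≤ c) (hf : 0 < ⨅ i, f i) :
    c / ⨅ i, f i = ⨆ i, c / f i := by
  -- an empty or unbounded infimum takes the junk value `0`, which `hf` excludes
  have : Nonempty ι := by
    by_contra h
    rw [not_nonempty_iff] at h
    simp [Real.iInf_of_isEmpty] at hf
  have hbdd : BddBelow (Set.range f) := by
    by_contra h
    rw [Real.iInf_of_not_bddBelow h] at hf
    exact lt_irrefl _ hf
  have hpos : ∀ a ∈ Set.range f, 0 < a := by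
    rintro _ ⟨i, rfl⟩
    exact hf.trans_le (ciInf_le hbdd i)
  have hmap := AntitoneOn.map_csInf_of_continuousWithinAt (f := fun x => c / x)
    (continuousAt_const.div continuousAt_id hf.ne').continuousWithinAt
    (fun a ha b _ hab => div_le_div_of_nonneg_left hc (hpos a ha) hab) (Set.range_nonempty f) hbdd
  rwa [← Set.range_comp] at hmap

section InnerProductSpace

variable {E : Type*} [NormedAddCommGroup E] [InnerProductSpace ℝ E]

/-- For a unit vector `u`, the reflection in the hyperplane `⟪u, ·⟫ = 1` supporting the unit
ball at `u`. -/
def tangentReflection (u y : E) : E :=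
  y - (2 * (⟪u, y⟫ - 1)) • u

lemma inner_tangentReflection {u : E} (hu : ‖u‖ = 1) (y : E) :
    ⟪u, tangentReflection u y⟫ = 2 - ⟪u, y⟫ := by
  rw [tangentReflection, inner_sub_right, real_inner_smul_right, real_inner_self_eq_norm_sq, hu]
  ring

lemma norm_sub_tangentReflection_of_inner_eq_one {u p : E} (hu : ‖u‖ = 1) (hp : ⟪u, p⟫ = 1)
    (y : E) : ‖p - tangentReflection u y‖ = ‖p - y‖ := by
  have hsq : ‖p - tangentReflection u y‖ ^ 2 = ‖p - y‖ ^ 2 := by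
    rw [tangentReflection, sub_sub_eq_add_sub, add_sub_right_comm, norm_add_sq_real, norm_smul,
      hu, real_inner_smul_right, inner_sub_left, real_inner_comm u p, real_inner_comm u y, hp,
      Real.norm_eq_abs, mul_one, sq_abs]
    ring
  exact (sq_eq_sq₀ (norm_nonneg _) (norm_nonneg _)).mp hsq

lemma norm_sub_tangentReflection_le {w : E} (hw : ‖w‖ = 1) (x y : E) :
    ‖x - tangentReflection w y‖ ≤ ‖x - w‖ + ‖w - y‖ := by
  have hww : ⟪w, w⟫ = 1 := by rw [real_inner_self_eq_norm_sq, hw, one_pow]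
  calc ‖x - tangentReflection w y‖ ≤ ‖x - w‖ + ‖w - tangentReflection w y‖ :=
        norm_sub_le_norm_sub_add_norm_sub _ _ _
    _ = ‖x - w‖ + ‖w - y‖ := by rw [norm_sub_tangentReflection_of_inner_eq_one hw hww]

lemma norm_sub_smul_inv_norm_le {z p : E} (hz : ‖z‖ ≤ 1) (hp : 1 ≤ ‖p‖) :
    ‖z - ‖p‖⁻¹ • p‖ ≤ ‖z - p‖ := by
  have hp0 : 0 < ‖p‖ := one_pos.trans_le hp
  have hzp : ⟪z, p⟫ ≤ ‖p‖ :=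
    (real_inner_le_norm z p).trans (mul_le_of_le_one_left hp0.le hz)
  have hsq : ‖z - ‖p‖⁻¹ • p‖ ^ 2 ≤ ‖z - p‖ ^ 2 := by
    rw [norm_sub_sq_real, norm_sub_sq_real, real_inner_smul_right, norm_smul, norm_inv, norm_norm,
      inv_mul_cancel₀ hp0.ne']
    have hcoef : 0 ≤ 1 - ‖p‖⁻¹ := sub_nonneg.mpr (inv_le_one_of_one_le₀ hp)
    have key : (1 - ‖p‖⁻¹) * ⟪z, p⟫ ≤ ‖p‖ - 1 := by
      calc (1 - ‖p‖⁻¹) * ⟪z, p⟫ ≤ (1 - ‖p‖⁻¹) * ‖p‖ := mul_le_mul_of_nonneg_left hzp hcoef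
        _ = ‖p‖ - 1 := by field_simp
    nlinarith
  exact (sq_le_sq₀ (norm_nonneg _) (norm_nonneg _)).mp hsq

lemma exists_mem_sphere_norm_sub_add_norm_sub_le {x y u : E} (hx : ‖x‖ ≤ 1) (hy : ‖y‖ ≤ 1)
    (hu : ‖u‖ = 1) :
    ∃ w ∈ sphere (0 : E) 1, ‖x - w‖ + ‖w - y‖ ≤ ‖x - tangentReflection u y‖ := by
  have inner_le_one : ∀ z : E, ‖z‖ ≤ 1 → ⟪u, z⟫ ≤ 1 := fun z hz =>
    (real_inner_le_norm u z).trans (by rwa [hu, one_mul])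
  obtain ⟨p, hp_seg, hp⟩ : ∃ p ∈ segment ℝ x (tangentReflection u y), ⟪u, p⟫ = 1 :=
    (convex_segment _ _).isPreconnected.intermediate_value (left_mem_segment ℝ _ _)
      (right_mem_segment ℝ _ _) (continuous_const.inner continuous_id).continuousOn
      ⟨inner_le_one x hx, by rw [id, inner_tangentReflection hu]; linarith [inner_le_one y hy]⟩
  have hp1 : 1 ≤ ‖p‖ := by simpa [hu, hp] using real_inner_le_norm u p
  refine ⟨‖p‖⁻¹ • p, ?_, ?_⟩
  · rw [mem_sphere_zero_iff_norm, norm_smul, norm_inv, norm_norm,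
      inv_mul_cancel₀ (one_pos.trans_le hp1).ne']
  calc ‖x - ‖p‖⁻¹ • p‖ + ‖‖p‖⁻¹ • p - y‖ ≤ ‖x - p‖ + ‖p - y‖ := by
        rw [norm_sub_rev _ y, norm_sub_rev p y]
        exact add_le_add (norm_sub_smul_inv_norm_le hx hp1) (norm_sub_smul_inv_norm_le hy hp1)
    _ = ‖x - p‖ + ‖p - tangentReflection u y‖ := by
        rw [norm_sub_tangentReflection_of_inner_eq_one hu hp]
    _ = ‖x - tangentReflection u y‖ := by
        simpa only [dist_eq_norm] using dist_add_dist_of_mem_segment hp_seg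

theorem sInf_norm_sub_add_norm_sub_sphere_eq_sInf_norm_sub_tangentReflection {x y : E}
    (hx : ‖x‖ ≤ 1) (hy : ‖y‖ ≤ 1) :
    sInf ((fun w => ‖x - w‖ + ‖w - y‖) '' sphere (0 : E) 1) =
      sInf ((fun u => ‖x - tangentReflection u y‖) '' sphere (0 : E) 1) := by
  apply csInf_eq_csInf_of_forall_exists_le
  · rintro _ ⟨w, hw, rfl⟩
    exact ⟨_, ⟨w, hw, rfl⟩, norm_sub_tangentReflection_le (mem_sphere_zero_iff_norm.mp hw) x y⟩
  · rintro _ ⟨u, hu, rfl⟩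
    obtain ⟨w, hw, hle⟩ :=
      exists_mem_sphere_norm_sub_add_norm_sub_le hx hy (mem_sphere_zero_iff_norm.mp hu)
    exact ⟨_, ⟨w, hw, rfl⟩, hle⟩

end InnerProductSpace

lemma Complex.norm_two_sub_conj_mul_sub_mul_conj {c : ℂ} (hc : ‖c‖ = 1) (z₁ z₂ : ℂ) :
    ‖2 - conj c * z₁ - c * conj z₂‖ = ‖z₁ - tangentReflection c z₂‖ := by
  have hcc : c * conj c = 1 := by rw [mul_conj, normSq_eq_norm_sq, hc]; norm_num
  have hid : z₁ - tangentReflection c z₂ = -c * (2 - conj c * z₁ - c * conj z₂) := by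
    rw [tangentReflection, Complex.inner, real_smul, ofReal_mul, ofReal_sub, re_eq_add_conj]
    simp only [map_mul, conj_conj, ofReal_ofNat, ofReal_one]
    linear_combination (z₂ - z₁) * hcc
  rw [hid, norm_mul, norm_neg, hc, one_mul]

theorem sU_eq_sup_halfplanes_general (z₁ z₂ : ℂ)
    (hz₁ : ‖z₁‖ < 1) (hz₂ : ‖z₂‖ < 1) :
    (sU z₁ z₂ = ⨆ θ : ℝ, ‖z₁ - z₂‖ /
        ‖2 - Complex.exp (-(θ : ℂ) * Complex.I) * z₁ -
          Complex.exp ((θ : ℂ) * Complex.I) * (starRingEnd ℂ) z₂‖) ∧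
      sInf ((fun w => ‖z₁ - w‖ + ‖w - z₂‖) ''
          {w : ℂ | ‖w‖ = 1}) =
        sInf (Set.range fun θ : ℝ =>
          ‖2 - Complex.exp (-(θ : ℂ) * Complex.I) * z₁ -
            Complex.exp ((θ : ℂ) * Complex.I) * (starRingEnd ℂ) z₂‖) := by
  have hsphere : {w : ℂ | ‖w‖ = 1} = sphere 0 1 := by ext; simp
  have hrange : (Set.range fun θ : ℝ =>
      ‖2 - exp (-(θ : ℂ) * I) * z₁ - exp ((θ : ℂ) * I) * conj z₂‖) =
      (fun u => ‖z₁ - tangentReflection u z₂‖) '' sphere 0 1 := by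
    rw [← range_exp_mul_I, ← Set.range_comp]
    congr 1
    funext θ
    rw [Function.comp_apply, ← norm_two_sub_conj_mul_sub_mul_conj (norm_exp_ofReal_mul_I θ),
      ← exp_conj, map_mul, conj_ofReal, conj_I, mul_neg, neg_mul]
  have hinf : sInf ((fun w => ‖z₁ - w‖ + ‖w - z₂‖) '' {w : ℂ | ‖w‖ = 1}) =
      sInf (Set.range fun θ : ℝ =>
        ‖2 - exp (-(θ : ℂ) * I) * z₁ - exp ((θ : ℂ) * I) * conj z₂‖) := by
    rw [hrange, hsphere]
    exact sInf_norm_sub_add_norm_sub_sphere_eq_sInf_norm_sub_tangentReflection hz₁.le hz₂.le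
  refine ⟨?_, hinf⟩
  have hpos : 0 < sInf ((fun w => ‖z₁ - w‖ + ‖w - z₂‖) '' {w : ℂ | ‖w‖ = 1}) := by
    refine (by linarith : (0 : ℝ) < 2 - ‖z₁‖ - ‖z₂‖).trans_le (le_csInf ⟨_, 1, by simp, rfl⟩ ?_)
    rintro _ ⟨w, hw, rfl⟩
    linarith [norm_sub_norm_le w z₁, norm_sub_norm_le w z₂, norm_sub_rev w z₁, hw.symm.le]
  rw [hinf] at hpos
  rw [sU, hinf]
  exact div_iInf_eq_iSup_div (norm_nonneg _) hpos

theorem sU_eq_sup_halfplanes (z₁ z₂ : ℂ)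
    (hz₁ : ‖z₁‖ < 1) (hz₂ : ‖z₂‖ < 1) (hne : z₁ ≠ z₂) :
    (sU z₁ z₂ = ⨆ θ : ℝ, ‖z₁ - z₂‖ /
        ‖2 - Complex.exp (-(θ : ℂ) * Complex.I) * z₁ -
          Complex.exp ((θ : ℂ) * Complex.I) * (starRingEnd ℂ) z₂‖) ∧
      sInf ((fun w => ‖z₁ - w‖ + ‖w - z₂‖) ''
          {w : ℂ | ‖w‖ = 1}) =
        sInf (Set.range fun θ : ℝ =>
          ‖2 - Complex.exp (-(θ : ℂ) * Complex.I) * z₁ -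
            Complex.exp ((θ : ℂ) * Complex.I) * (starRingEnd ℂ) z₂‖) :=
  sU_eq_sup_halfplanes_general z₁ z₂ hz₁ hz₂
end

section
/- Let z₁, z₂ ∈ 𝕌 and suppose ψ ∈ ℝ is such that e^{iψ} minimizes the function w ↦ |z₁ − w| + |w − z₂| over the unit circle {|w| = 1} (i.e., e^{iψ} is a contact point of the maximal ellipse with foci z₁, z₂ inscribed in 𝕌). Then inf_{|w| = 1} (|z₁ − w| + |w − z₂|) = |2 − e^{−iψ} z₁ − e^{iψ} conj(z₂)|; in particular, for z₁ ≠ z₂, s_𝕌(z₁, z₂) = |z₁ − z₂| / |2 − e^{−iψ} z₁ − e^{iψ} conj(z₂)|, the triangular ratio distance in the supporting half-plane of 𝕌 at e^{iψ}. -/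
open Complex

open scoped ComplexConjugate

/-!
Put `w = e^{iψ}` and `c = 2 - w̄ z₁ - w z̄₂`. For every unimodular `w` one has
`c = w̄ (w - z₁) + w conj (w - z₂)`, so `|c| ≤ |z₁ - w| + |w - z₂|`. Conversely, after rotating `w`
to `1`, the point `2 - z̄₂` is the reflection of `z₂` in the tangent line `re = 1`; the segment from
`z₁` to it meets that line at a point `p` with `|z₁ - p| + |p - z₂| = |c|`, and the radial projection
of `p` onto the circle does not increase its distances to points of the closed disk. So some
unimodular `u` has `|z₁ - u| + |u - z₂| ≤ |c|`, and at a minimizer `w` both bounds meet.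
-/

theorem norm_sub_inv_norm_smul_le {E : Type*} [NormedAddCommGroup E] [InnerProductSpace ℝ E]
    {p q : E} (hq : ‖q‖ ≤ 1) (hp : 1 ≤ ‖p‖) : ‖q - ‖p‖⁻¹ • p‖ ≤ ‖q - p‖ := by
  have hp0 : 0 < ‖p‖ := one_pos.trans_le hp
  have hinner : inner ℝ q p ≤ ‖p‖ :=
    (real_inner_le_norm q p).trans (mul_le_of_le_one_left hp0.le hq)
  have hscale : 0 ≤ 1 - ‖p‖⁻¹ := sub_nonneg.2 (inv_le_one_of_one_le₀ hp)
  refine (pow_le_pow_iff_left₀ (norm_nonneg _) (norm_nonneg _) two_ne_zero).1 ?_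
  rw [norm_sub_sq_real, norm_sub_sq_real, real_inner_smul_right,
    norm_smul, norm_inv, norm_norm, inv_mul_cancel₀ hp0.ne']
  -- `‖q - p‖² - ‖q - p/‖p‖‖² = ‖p‖² - 1 - 2 (1 - 1/‖p‖) ⟪q, p⟫ ≥ (‖p‖ - 1)²`
  nlinarith [mul_le_mul_of_nonneg_left hinner hscale, inv_mul_cancel₀ hp0.ne']

theorem norm_two_sub_conj_mul_sub_mul_conj_le {w : ℂ} (hw : ‖w‖ = 1) (a b : ℂ) :
    ‖2 - conj w * a - w * conj b‖ ≤ ‖a - w‖ + ‖w - b‖ := by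
  have hww : conj w * w = 1 := by rw [conj_mul', hw]; norm_num
  have hsplit : 2 - conj w * a - w * conj b = conj w * (w - a) + w * conj (w - b) := by
    rw [map_sub]; linear_combination (-2 : ℂ) * hww
  rw [hsplit, norm_sub_rev a w]
  calc ‖conj w * (w - a) + w * conj (w - b)‖
      ≤ ‖conj w * (w - a)‖ + ‖w * conj (w - b)‖ := norm_add_le _ _
    _ = ‖w - a‖ + ‖w - b‖ := by
      rw [norm_mul, norm_mul, norm_conj, norm_conj, hw, one_mul, one_mul]

theorem exists_norm_eq_one_norm_sub_add_norm_sub_le {a b : ℂ} (ha : ‖a‖ ≤ 1) (hb : ‖b‖ ≤ 1) :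
    ∃ u : ℂ, ‖u‖ = 1 ∧ ‖a - u‖ + ‖u - b‖ ≤ ‖2 - a - conj b‖ := by
  -- `2 - conj b` is the reflection of `b` in the line `re = 1`, and `p` is where the segment
  -- from `a` to it crosses that line.
  set σ := 2 - conj b
  have hσ : σ.re = 2 - b.re := by simp [σ]
  have ha_re : a.re ≤ 1 := (re_le_norm a).trans ha
  have hb_re : b.re ≤ 1 := (re_le_norm b).trans hb
  set t := (1 - a.re) / (σ.re - a.re)
  have ht₀ : 0 ≤ t := div_nonneg (by linarith) (by linarith)
  have ht₁ : t ≤ 1 := div_le_one_of_le₀ (by linarith) (by linarith)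
  set p := AffineMap.lineMap a σ t
  have hp_re : p.re = 1 := by
    have : p.re = a.re + t * (σ.re - a.re) := by
      simp only [p, AffineMap.lineMap_apply, vsub_eq_sub, vadd_eq_add, add_re, smul_re, sub_re,
        smul_eq_mul]
      ring
    rw [this, div_mul_cancel_of_imp fun h => by linarith]; ring
  have hp_one : 1 ≤ ‖p‖ := hp_re ▸ re_le_norm p
  have hp_σ : ‖p - σ‖ = ‖p - b‖ := by
    have : p - σ = -conj (p - b) := by apply Complex.ext <;> simp [σ] <;> linarith
    rw [this, norm_neg, norm_conj]
  refine ⟨(‖p‖⁻¹ : ℝ) • p, norm_smul_inv_norm (ne_zero_of_norm_ne_zero (by linarith)), ?_⟩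
  calc ‖a - (‖p‖⁻¹ : ℝ) • p‖ + ‖(‖p‖⁻¹ : ℝ) • p - b‖ ≤ ‖a - p‖ + ‖p - b‖ := by
        rw [norm_sub_rev _ b, norm_sub_rev p b]
        exact add_le_add (norm_sub_inv_norm_smul_le ha hp_one) (norm_sub_inv_norm_smul_le hb hp_one)
    _ = ‖a - σ‖ := by
        rw [← hp_σ, ← dist_eq_norm, ← dist_eq_norm, ← dist_eq_norm]
        exact Wbtw.dist_add_dist ⟨t, ⟨ht₀, ht₁⟩, rfl⟩
    _ = ‖2 - a - conj b‖ := by rw [norm_sub_rev, sub_right_comm]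

theorem exists_norm_eq_one_norm_sub_add_norm_sub_le_of_norm_eq_one {w a b : ℂ} (hw : ‖w‖ = 1)
    (ha : ‖a‖ ≤ 1) (hb : ‖b‖ ≤ 1) :
    ∃ u : ℂ, ‖u‖ = 1 ∧ ‖a - u‖ + ‖u - b‖ ≤ ‖2 - conj w * a - w * conj b‖ := by
  have hww : conj w * w = 1 := by rw [conj_mul', hw]; norm_num
  have hrot (z : ℂ) : ‖conj w * z‖ = ‖z‖ := by rw [norm_mul, norm_conj, hw, one_mul]
  obtain ⟨u, hu, hle⟩ := exists_norm_eq_one_norm_sub_add_norm_sub_le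
    (a := conj w * a) (b := conj w * b) (by rwa [hrot]) (by rwa [hrot])
  refine ⟨w * u, by rw [norm_mul, hw, hu, one_mul], ?_⟩
  calc ‖a - w * u‖ + ‖w * u - b‖ = ‖conj w * a - u‖ + ‖u - conj w * b‖ := by
        rw [← hrot (a - w * u), ← hrot (w * u - b)]
        congr 2
        · linear_combination (-u) * hww
        · linear_combination u * hww
    _ ≤ ‖2 - conj w * a - conj (conj w * b)‖ := hle
    _ = ‖2 - conj w * a - w * conj b‖ := by rw [map_mul, conj_conj]

theorem sU_eq_at_contact_point (z₁ z₂ : ℂ)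
    (hz₁ : ‖z₁‖ < 1) (hz₂ : ‖z₂‖ < 1) (ψ : ℝ)
    (hψ : ∀ w : ℂ, ‖w‖ = 1 →
      ‖z₁ - Complex.exp ((ψ : ℂ) * Complex.I)‖ +
        ‖Complex.exp ((ψ : ℂ) * Complex.I) - z₂‖ ≤
      ‖z₁ - w‖ + ‖w - z₂‖) :
    sInf ((fun w => ‖z₁ - w‖ + ‖w - z₂‖) ''
        {w : ℂ | ‖w‖ = 1}) =
      ‖2 - Complex.exp (-(ψ : ℂ) * Complex.I) * z₁ -
        Complex.exp ((ψ : ℂ) * Complex.I) * (starRingEnd ℂ) z₂‖ ∧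
    (z₁ ≠ z₂ →
      sU z₁ z₂ = ‖z₁ - z₂‖ /
        ‖2 - Complex.exp (-(ψ : ℂ) * Complex.I) * z₁ -
          Complex.exp ((ψ : ℂ) * Complex.I) * (starRingEnd ℂ) z₂‖) := by
  set w := exp (ψ * I)
  have hw : ‖w‖ = 1 := norm_exp_ofReal_mul_I ψ
  have hconj : exp (-(ψ : ℂ) * I) = conj w := by rw [← exp_conj]; simp
  have hinf : sInf ((fun w => ‖z₁ - w‖ + ‖w - z₂‖) '' {w : ℂ | ‖w‖ = 1}) =
      ‖z₁ - w‖ + ‖w - z₂‖ :=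
    IsLeast.csInf_eq ⟨⟨w, hw, rfl⟩, Set.forall_mem_image.2 hψ⟩
  obtain ⟨u, hu, hle⟩ :=
    exists_norm_eq_one_norm_sub_add_norm_sub_le_of_norm_eq_one hw hz₁.le hz₂.le
  have key : sInf ((fun w => ‖z₁ - w‖ + ‖w - z₂‖) '' {w : ℂ | ‖w‖ = 1}) =
      ‖2 - conj w * z₁ - w * conj z₂‖ :=
    hinf ▸ le_antisymm ((hψ u hu).trans hle) (norm_two_sub_conj_mul_sub_mul_conj_le hw z₁ z₂)
  rw [hconj]
  exact ⟨key, fun _ => by rw [sU, key]⟩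
end

section
/- Let z₁, z₂ ∈ 𝕌 and suppose ψ ∈ ℝ is such that e^{iψ} minimizes the function w ↦ |z₁ − w| + |w − z₂| over the unit circle {|w| = 1}. Then the complex numbers 1 − e^{−iψ} z₁ and 1 − e^{iψ} conj(z₂) have the same argument; equivalently, |(1 − e^{−iψ} z₁) + (1 − e^{iψ} conj(z₂))| = |1 − e^{−iψ} z₁| + |1 − e^{iψ} conj(z₂)|. -/
/-!
Write `a = 1 - e^{-iψ} z₁` and `b = 1 - e^{iψ} z̄₂`. The derivative of `θ ↦ |e^{iθ} - z|` at `ψ`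
is `Im c / |c|` with `c = 1 - e^{-iψ} z`, and for `z = z₂` this `c` is `b̄`. So at the minimiser
the vanishing derivative of the focal sum says `Im a / |a| = Im b / |b|`. Since `|z₁|, |z₂| < 1`,
`a` and `b` lie in the right half-plane, where the argument is `arcsin (Im / |·|)`; hence they
have the same argument, lie on one ray, and their norms add.
-/

open ComplexConjugate

theorem HasDerivAt.norm {F : Type*} [NormedAddCommGroup F] [InnerProductSpace ℝ F]
    {f : ℝ → F} {f' : F} {x : ℝ} (hf : HasDerivAt f f' x) (h0 : f x ≠ 0) :
    HasDerivAt (fun t => ‖f t‖) (Inner.inner ℝ (f x) f' / ‖f x‖) x := by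
  have hsq := hf.norm_sq.sqrt (by positivity)
  simp only [Real.sqrt_sq (norm_nonneg _)] at hsq
  convert hsq using 1
  rw [mul_div_mul_left _ _ two_ne_zero]

namespace Complex

theorem hasDerivAt_exp_ofReal_mul_I (θ : ℝ) :
    HasDerivAt (fun t : ℝ => exp (t * I)) (exp (θ * I) * I) θ := by
  simpa using ((hasDerivAt_id θ).ofReal_comp.mul_const I).cexp

theorem conj_exp_ofReal_mul_I (θ : ℝ) : conj (exp (θ * I)) = exp (-θ * I) := by
  rw [← exp_conj, map_mul, conj_ofReal, conj_I, neg_mul, mul_neg]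

theorem one_sub_exp_neg_mul_I_mul (θ : ℝ) (z : ℂ) :
    1 - exp (-θ * I) * z = exp (-θ * I) * (exp (θ * I) - z) := by
  rw [mul_sub, ← exp_add, neg_mul, neg_add_cancel, exp_zero]

theorem norm_one_sub_exp_neg_mul_I_mul (θ : ℝ) (z : ℂ) :
    ‖1 - exp (-θ * I) * z‖ = ‖exp (θ * I) - z‖ := by
  rw [one_sub_exp_neg_mul_I_mul, norm_mul, ← ofReal_neg, norm_exp_ofReal_mul_I, one_mul]

theorem hasDerivAt_norm_exp_ofReal_mul_I_sub {z : ℂ} {θ : ℝ} (h : exp (θ * I) ≠ z) :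
    HasDerivAt (fun t : ℝ => ‖exp (t * I) - z‖)
      ((1 - exp (-θ * I) * z).im / ‖1 - exp (-θ * I) * z‖) θ := by
  have hd := HasDerivAt.norm ((hasDerivAt_exp_ofReal_mul_I θ).sub_const z) (sub_ne_zero.2 h)
  convert hd using 2
  · rw [Complex.inner, one_sub_exp_neg_mul_I_mul, map_sub, ← conj_exp_ofReal_mul_I]
    simp only [mul_im, mul_re, sub_re, sub_im, conj_re, conj_im, I_re, I_im]
    ring
  · exact norm_one_sub_exp_neg_mul_I_mul θ z

theorem im_div_norm_eq_of_forall_sum_norm_le {z₁ z₂ : ℂ} {ψ : ℝ}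
    (h₁ : exp (ψ * I) ≠ z₁) (h₂ : exp (ψ * I) ≠ z₂)
    (hψ : ∀ θ : ℝ, ‖z₁ - exp (ψ * I)‖ + ‖exp (ψ * I) - z₂‖ ≤
      ‖z₁ - exp (θ * I)‖ + ‖exp (θ * I) - z₂‖) :
    (1 - exp (-ψ * I) * z₁).im / ‖1 - exp (-ψ * I) * z₁‖ =
      (1 - exp (ψ * I) * conj z₂).im / ‖1 - exp (ψ * I) * conj z₂‖ := by
  have hmin : IsLocalMin (fun θ : ℝ => ‖exp (θ * I) - z₁‖ + ‖exp (θ * I) - z₂‖) ψ :=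
    Filter.Eventually.of_forall fun θ => by simpa only [norm_sub_rev z₁] using hψ θ
  have hcrit := hmin.hasDerivAt_eq_zero
    ((hasDerivAt_norm_exp_ofReal_mul_I_sub h₁).add (hasDerivAt_norm_exp_ofReal_mul_I_sub h₂))
  have hconj : 1 - exp (ψ * I) * conj z₂ = conj (1 - exp (-ψ * I) * z₂) := by
    rw [map_sub, map_one, map_mul, ← conj_exp_ofReal_mul_I, conj_conj]
  rw [hconj, conj_im, norm_conj, neg_div]
  linarith

theorem re_one_sub_pos {w : ℂ} (hw : ‖w‖ < 1) : 0 < (1 - w).re := by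
  rw [sub_re, one_re, sub_pos]
  exact (re_le_norm w).trans_lt hw

end Complex

open Complex

theorem contact_point_same_argument (z₁ z₂ : ℂ)
    (hz₁ : ‖z₁‖ < 1) (hz₂ : ‖z₂‖ < 1) (ψ : ℝ)
    (hψ : ∀ w : ℂ, ‖w‖ = 1 →
      ‖z₁ - Complex.exp ((ψ : ℂ) * Complex.I)‖ +
        ‖Complex.exp ((ψ : ℂ) * Complex.I) - z₂‖ ≤
      ‖z₁ - w‖ + ‖w - z₂‖) :
    ‖(1 - Complex.exp (-(ψ : ℂ) * Complex.I) * z₁) +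
        (1 - Complex.exp ((ψ : ℂ) * Complex.I) * (starRingEnd ℂ) z₂)‖ =
      ‖1 - Complex.exp (-(ψ : ℂ) * Complex.I) * z₁‖ +
        ‖1 - Complex.exp ((ψ : ℂ) * Complex.I) * (starRingEnd ℂ) z₂‖ := by
  have hne : ∀ z : ℂ, ‖z‖ < 1 → exp (ψ * I) ≠ z := fun z hz h => by
    rw [← h, norm_exp_ofReal_mul_I] at hz
    exact hz.false
  have hre₁ : 0 < (1 - exp (-ψ * I) * z₁).re := re_one_sub_pos <| by
    rwa [norm_mul, ← ofReal_neg, norm_exp_ofReal_mul_I, one_mul]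
  have hre₂ : 0 < (1 - exp (ψ * I) * conj z₂).re := re_one_sub_pos <| by
    rwa [norm_mul, norm_exp_ofReal_mul_I, one_mul, norm_conj]
  have harg : arg (1 - exp (-ψ * I) * z₁) = arg (1 - exp (ψ * I) * conj z₂) := by
    rw [arg_of_re_nonneg hre₁.le, arg_of_re_nonneg hre₂.le,
      im_div_norm_eq_of_forall_sum_norm_le (hne z₁ hz₁) (hne z₂ hz₂)
        fun θ => hψ _ (norm_exp_ofReal_mul_I θ)]
  exact (sameRay_iff.2 (Or.inr (Or.inr harg))).norm_add
end

section
/- Let D ⊆ ℂ be an open convex set, u, v ∈ D, and let w ∈ ∂D minimize the function ζ ↦ |u − ζ| + |ζ − v| over ∂D. Suppose n ∈ ℂ with |n| = 1 is an inward unit normal of a supporting line of D at w, i.e., Re(conj(n)(z − w)) > 0 for all z ∈ D. Then the unit vectors (u − w)/|u − w| and (v − w)/|v − w| make equal angles with n; equivalently, (u − w)/|u − w| + (v − w)/|v − w| = c · n for some real c ≥ 0. -/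
/-!
The open ellipse `{ζ | ‖u - ζ‖ + ‖ζ - v‖ < ‖u - w‖ + ‖w - v‖}` lies in `D`: from a point outside
`D`, the segment back to the focus `u` crosses `∂D` at a point with a smaller focal sum. So `w`
minimises the focal sum on the closed half-space `{z | ⟪n, z - w⟫ ≤ 0}`, which misses `D`.
Fermat's rule there says that the sum `s` of the unit vectors from `w` to the foci (minus the
gradient of the focal sum at `w`) satisfies `⟪s, d⟫ ≤ 0` whenever `⟪n, d⟫ ≤ 0`, and the only such
vectors `s` are the nonnegative multiples of `n`.
-/

open Complex Filter
open scoped RealInnerProductSpace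

theorem IsPreconnected.inter_frontier_nonempty {X : Type*} [TopologicalSpace X] {s t : Set X}
    (hs : IsPreconnected s) (hst : (s ∩ t).Nonempty) (hst' : (s \ t).Nonempty) :
    (s ∩ frontier t).Nonempty := by
  by_contra h
  have hcover : s ⊆ interior t ∪ interior tᶜ := fun x hx ↦ by
    by_cases hxt : x ∈ interior t
    · exact .inl hxt
    · exact .inr <| interior_compl (s := t) ▸ fun hcl ↦ h ⟨x, hx, hcl, hxt⟩
  obtain ⟨x, hxs, hxt⟩ := hst
  obtain ⟨y, hys, hyt⟩ := hst'
  obtain ⟨z, -, hz, hz'⟩ := hs _ _ isOpen_interior isOpen_interior hcover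
    ⟨x, hxs, (hcover hxs).resolve_right fun h ↦ interior_subset h hxt⟩
    ⟨y, hys, (hcover hys).resolve_left fun h ↦ hyt (interior_subset h)⟩
  exact interior_subset hz' (interior_subset hz)

theorem mem_of_norm_sub_add_norm_sub_lt {E : Type*} [NormedAddCommGroup E] [NormedSpace ℝ E]
    {D : Set E} {u v w ζ : E} (hu : u ∈ D)
    (hmin : ∀ ξ ∈ frontier D, ‖u - w‖ + ‖w - v‖ ≤ ‖u - ξ‖ + ‖ξ - v‖)
    (hζ : ‖u - ζ‖ + ‖ζ - v‖ < ‖u - w‖ + ‖w - v‖) : ζ ∈ D := by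
  by_contra hζD
  obtain ⟨ξ, hξ, hξD⟩ := (convex_segment u ζ).isPreconnected.inter_frontier_nonempty
    ⟨u, left_mem_segment ℝ u ζ, hu⟩ ⟨ζ, right_mem_segment ℝ u ζ, hζD⟩
  have hsplit : ‖u - ξ‖ + ‖ξ - ζ‖ = ‖u - ζ‖ := by
    simpa only [dist_eq_norm] using dist_add_dist_of_mem_segment hξ
  have hξmin := hmin ξ hξD
  have htri := norm_sub_le_norm_sub_add_norm_sub ξ ζ v
  linarith

section InnerProductSpace

variable {E : Type*} [NormedAddCommGroup E] [InnerProductSpace ℝ E]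

theorem hasFDerivAt_norm {x : E} (hx : x ≠ 0) :
    HasFDerivAt (‖·‖) (‖x‖⁻¹ • innerSL ℝ x) x := by
  have := (hasStrictFDerivAt_norm_sq x).hasFDerivAt.sqrt (by simpa using hx)
  simp only [Real.sqrt_sq (norm_nonneg _)] at this
  refine this.congr_fderiv ?_
  ext y
  simp only [one_div, mul_inv_rev, smul_apply, coe_innerSL_apply, nsmul_eq_mul, Nat.cast_ofNat,
    smul_eq_mul]
  field_simp

theorem hasFDerivAt_norm_sub_add_norm_sub {u v w : E} (hu : u ≠ w) (hv : v ≠ w) :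
    HasFDerivAt (fun ζ ↦ ‖u - ζ‖ + ‖ζ - v‖)
      (innerSL ℝ (-(‖u - w‖⁻¹ • (u - w) + ‖v - w‖⁻¹ • (v - w)))) w := by
  have hu' := (hasFDerivAt_norm (sub_ne_zero.mpr hu)).comp w
    ((hasFDerivAt_const u w).sub (hasFDerivAt_id w))
  have hv' := (hasFDerivAt_norm (sub_ne_zero.mpr hv.symm)).comp w
    ((hasFDerivAt_id w).sub (hasFDerivAt_const v w))
  refine (hu'.add hv').congr_fderiv ?_
  ext d
  simp only [map_sub, zero_sub, ContinuousLinearMap.comp_neg, ContinuousLinearMap.comp_id,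
    sub_zero, add_apply, neg_apply, smul_apply, sub_apply, coe_innerSL_apply, smul_eq_mul,
    norm_sub_rev v w, neg_add_rev, map_add, map_neg, map_smul]
  ring

theorem inner_nonneg_of_isMinOn_halfSpace {f : E → ℝ} {g n w : E}
    (hf : HasFDerivAt f (innerSL ℝ g) w) (hmin : IsMinOn f {z | ⟪n, z - w⟫ ≤ 0} w)
    {d : E} (hd : ⟪n, d⟫ ≤ 0) : 0 ≤ ⟪g, d⟫ := by
  have hcone : d ∈ posTangentConeAt {z | ⟪n, z - w⟫ ≤ 0} w := by
    refine mem_posTangentConeAt_of_frequently_mem (Eventually.frequently ?_)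
    filter_upwards [self_mem_nhdsWithin] with t (ht : 0 < t)
    simpa [inner_smul_right] using mul_nonpos_of_nonneg_of_nonpos ht.le hd
  simpa using hmin.localize.hasFDerivWithinAt_nonneg hf.hasFDerivWithinAt hcone

theorem exists_nonneg_smul_of_inner_nonpos {n s : E}
    (h : ∀ d, ⟪n, d⟫ ≤ 0 → ⟪s, d⟫ ≤ 0) : ∃ c : ℝ, 0 ≤ c ∧ s = c • n := by
  rcases eq_or_ne n 0 with rfl | hn
  · exact ⟨0, le_rfl, by simpa using h s (by simp)⟩
  have hns : 0 ≤ ⟪n, s⟫ := by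
    simpa [real_inner_comm] using h (-n) (by simp)
  -- Testing `h` on this vector orthogonal to `n` gives the reverse Cauchy–Schwarz inequality.
  have hd : ⟪n, ‖n‖ ^ 2 • s - ⟪n, s⟫ • n⟫ = 0 := by
    rw [inner_sub_right, inner_smul_right, inner_smul_right, real_inner_self_eq_norm_sq]
    ring
  have hsd := h _ hd.le
  rw [inner_sub_right, inner_smul_right, inner_smul_right, real_inner_self_eq_norm_sq,
    real_inner_comm n s] at hsd
  have hcs : ⟪n, s⟫ = ‖n‖ * ‖s‖ := by
    nlinarith [real_inner_le_norm n s, norm_nonneg n, norm_nonneg s]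
  refine ⟨‖s‖ / ‖n‖, by positivity, ?_⟩
  rw [div_eq_inv_mul, mul_smul, inner_eq_norm_mul_iff_real.mp hcs, smul_smul,
    inv_mul_cancel₀ (norm_ne_zero_iff.mpr hn), one_smul]

theorem exists_nonneg_smul_normal_eq_sum_unit_vectors {D : Set E} {u v w n : E}
    (hu : u ∈ D) (hv : v ∈ D)
    (hmin : ∀ ζ ∈ frontier D, ‖u - w‖ + ‖w - v‖ ≤ ‖u - ζ‖ + ‖ζ - v‖)
    (hnormal : ∀ z ∈ D, 0 < ⟪n, z - w⟫) :
    ∃ c : ℝ, 0 ≤ c ∧ ‖u - w‖⁻¹ • (u - w) + ‖v - w‖⁻¹ • (v - w) = c • n := by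
  have hwD : w ∉ D := fun hw ↦ by simpa using hnormal w hw
  have huw : u ≠ w := fun h ↦ hwD (h ▸ hu)
  have hvw : v ≠ w := fun h ↦ hwD (h ▸ hv)
  have hhalf : IsMinOn (fun ζ ↦ ‖u - ζ‖ + ‖ζ - v‖) {z | ⟪n, z - w⟫ ≤ 0} w := fun z hz ↦
    not_lt.mp fun hlt ↦ (hnormal z (mem_of_norm_sub_add_norm_sub_lt hu hmin hlt)).not_ge hz
  refine exists_nonneg_smul_of_inner_nonpos fun d hd ↦ ?_
  simpa only [inner_neg_left, neg_nonneg] using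
    inner_nonneg_of_isMinOn_halfSpace (hasFDerivAt_norm_sub_add_norm_sub huw hvw) hhalf hd

end InnerProductSpace

theorem optical_property_general (D : Set ℂ)
    (u v : ℂ) (hu : u ∈ D) (hv : v ∈ D)
    (w : ℂ)
    (hmin : ∀ ζ ∈ frontier D,
      ‖u - w‖ + ‖w - v‖ ≤
        ‖u - ζ‖ + ‖ζ - v‖)
    (n : ℂ)
    (hnormal : ∀ z ∈ D, 0 < ((starRingEnd ℂ) n * (z - w)).re) :
    ∃ c : ℝ, 0 ≤ c ∧
      (u - w) / ((‖u - w‖ : ℝ) : ℂ) + (v - w) / ((‖v - w‖ : ℝ) : ℂ) =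
        (c : ℂ) * n := by
  have hnormal' : ∀ z ∈ D, 0 < ⟪n, z - w⟫ := fun z hz ↦ by
    simpa [Complex.inner, mul_comm] using hnormal z hz
  obtain ⟨c, hc, hsum⟩ := exists_nonneg_smul_normal_eq_sum_unit_vectors hu hv hmin hnormal'
  refine ⟨c, hc, ?_⟩
  simpa [Complex.real_smul, div_eq_inv_mul] using hsum

theorem optical_property (D : Set ℂ) (hD : IsOpen D) (hconv : Convex ℝ D)
    (u v : ℂ) (hu : u ∈ D) (hv : v ∈ D)
    (w : ℂ) (hw : w ∈ frontier D)
    (hmin : ∀ ζ ∈ frontier D,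
      ‖u - w‖ + ‖w - v‖ ≤
        ‖u - ζ‖ + ‖ζ - v‖)
    (n : ℂ) (hn : ‖n‖ = 1)
    (hnormal : ∀ z ∈ D, 0 < ((starRingEnd ℂ) n * (z - w)).re) :
    ∃ c : ℝ, 0 ≤ c ∧
      (u - w) / ((‖u - w‖ : ℝ) : ℂ) + (v - w) / ((‖v - w‖ : ℝ) : ℂ) =
        (c : ℂ) * n :=
  optical_property_general D u v hu hv w hmin n hnormal
end

section
/- Let z₁, z₂ ∈ ℂ with |z₁| ≤ 1 and |z₂| ≤ 1, and define g(φ) = 2 − e^{−iφ} z₁ − e^{iφ} conj(z₂) for φ ∈ ℝ (so the curve g traces an ellipse centered at 2). Suppose ψ ∈ ℝ minimizes |g(φ)| over φ ∈ ℝ and set r = |g(ψ)|. Then the entire curve lies in the closed half-plane {z ∈ ℂ : Re(conj(g(ψ)) · z) ≥ r²}; that is, Re(conj(g(ψ)) · g(φ)) ≥ |g(ψ)|² for all φ ∈ ℝ. -/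
/-!
Rotate so that the nearest point is `p = 2 - A - B` with `A = e^{-iψ} z₁`, `B = e^{iψ} conj z₂`,
and put `W = conj p * A + p * conj B`. Then `g (ψ + 2θ) = p + 2i sin θ · (A e^{-iθ} - B e^{iθ})` and
`Re (conj p · (g (ψ + 2θ) - p)) = 2 sin θ (Re W sin θ - Im W cos θ)`, so the claim says that `W` is
a nonnegative real. Minimality of `‖p‖` gives `Im W = 0` to first order at `θ = 0`, and
`Re W + ‖A e^{-iθ} - B e^{iθ}‖² ≥ 0` for all `θ` to second order; at the best `θ` this reads
`‖A‖ ‖B‖ ≤ 1 - Re (u conj v)` for `u = 1 - A`, `v = 1 - B`, while `Im W = 0` says that `u` and `v`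
are real multiples of each other. Finally `Re W ≥ 0` means `‖u + v - 1‖ ≤ 1`, which for `u`, `v` in
the disk `‖1 - z‖ ≤ 1` is clear when `Re (u conj v) ≤ 0` and follows from the second-order
inequality when `u = s v` with `s > 0`.
-/

open Complex ComplexConjugate

open Filter Topology in
theorem eq_zero_of_forall_sin_mul_nonneg {F : ℝ → ℝ} (hF : ContinuousAt F 0)
    (h : ∀ θ, 0 ≤ Real.sin θ * F θ) : F 0 = 0 := by
  apply le_antisymm
  · refine le_of_tendsto (hF.tendsto.mono_left nhdsWithin_le_nhds : Tendsto F (𝓝[<] 0) _) ?_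
    filter_upwards [Ioo_mem_nhdsLT (neg_lt_zero.mpr Real.pi_pos)] with θ hθ
    exact nonpos_of_mul_nonneg_right (h θ) (Real.sin_neg_of_neg_of_neg_pi_lt hθ.2 hθ.1)
  · refine ge_of_tendsto (hF.tendsto.mono_left nhdsWithin_le_nhds : Tendsto F (𝓝[>] 0) _) ?_
    filter_upwards [Ioo_mem_nhdsGT Real.pi_pos] with θ hθ
    exact nonneg_of_mul_nonneg_right (h θ) (Real.sin_pos_of_pos_of_lt_pi hθ.1 hθ.2)

theorem nonneg_of_forall_sin_sq_mul_nonneg {F : ℝ → ℝ} (hF : Continuous F)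
    (h : ∀ θ, 0 ≤ Real.sin θ ^ 2 * F θ) (θ : ℝ) : 0 ≤ F θ := by
  have hzeros : {θ : ℝ | Real.sin θ = 0}.Countable :=
    (Set.countable_range fun n : ℤ => (n : ℝ) * Real.pi).mono fun θ hθ =>
      Real.sin_eq_zero_iff.mp hθ
  have hdense : Dense {θ : ℝ | 0 ≤ F θ} :=
    (hzeros.dense_compl ℝ).mono fun θ hθ => nonneg_of_mul_nonneg_right (h θ) (sq_pos_of_ne_zero hθ)
  exact (isClosed_le continuous_const hF).closure_subset (hdense θ)

theorem re_conj_mul_add_two_I_mul (p k : ℂ) (s : ℝ) :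
    (conj p * (p + 2 * I * s * k)).re = ‖p‖ ^ 2 + 2 * (s * (conj p * (I * k)).re) := by
  rw [mul_add, add_re, conj_mul', ← ofReal_pow, ofReal_re,
    show conj p * (2 * I * s * k) = ((2 * s : ℝ) : ℂ) * (conj p * (I * k)) by push_cast; ring,
    re_ofReal_mul, mul_assoc]

theorem norm_add_two_I_mul_sq (p k : ℂ) (s : ℝ) :
    ‖p + 2 * I * s * k‖ ^ 2 = ‖p‖ ^ 2 + 4 * (s * (conj p * (I * k)).re + s ^ 2 * ‖k‖ ^ 2) := by
  rw [norm_add_sq_real, Complex.inner]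
  have : 2 * I * s * k * conj p = ((2 * s : ℝ) : ℂ) * (conj p * (I * k)) := by push_cast; ring
  rw [this, re_ofReal_mul, norm_mul, norm_mul, norm_mul, norm_I, Complex.norm_real,
    Complex.norm_two]
  simp only [Real.norm_eq_abs, mul_pow, sq_abs]
  ring

theorem eq_zero_and_forall_add_sq_norm_nonneg {p : ℂ} {k : ℝ → ℂ} {a b : ℝ} (hk : Continuous k)
    (hpk : ∀ θ, (conj p * (I * k θ)).re = b * Real.sin θ - a * Real.cos θ)
    (hmin : ∀ θ, ‖p‖ ≤ ‖p + 2 * I * Real.sin θ * k θ‖) :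
    a = 0 ∧ ∀ θ, 0 ≤ b + ‖k θ‖ ^ 2 := by
  have hF : ∀ θ, 0 ≤ Real.sin θ * (b * Real.sin θ - a * Real.cos θ + Real.sin θ * ‖k θ‖ ^ 2) := by
    intro θ
    have := pow_le_pow_left₀ (norm_nonneg _) (hmin θ) 2
    rw [norm_add_two_I_mul_sq, hpk] at this
    linarith
  have ha : a = 0 := by
    simpa using eq_zero_of_forall_sin_mul_nonneg (by fun_prop) hF
  subst ha
  refine ⟨rfl, nonneg_of_forall_sin_sq_mul_nonneg (by fun_prop) fun θ => ?_⟩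
  linarith [hF θ]

theorem add_mul_le_two_mul_of_mul_le_sq {s N R : ℝ} (hs : 0 < s) (hsN : s * N ≤ 1)
    (h : (1 - 2 * s * R + s ^ 2 * N) * (1 - 2 * R + N) ≤ (1 - s * N) ^ 2) :
    (1 + s) * N ≤ 2 * R := by
  have hfactor : ((1 + s) * N - 2 * R) * ((1 + s) - 2 * s * R) ≤ 0 := by linear_combination h
  by_contra! hlt
  have : (1 + s) - 2 * s * R ≤ 0 := nonpos_of_mul_nonpos_right hfactor (by linarith)
  nlinarith

theorem norm_le_one_iff_normSq_le_one {z : ℂ} : ‖z‖ ≤ 1 ↔ normSq z ≤ 1 := by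
  rw [← Complex.sq_norm, sq_le_one_iff₀ (norm_nonneg z)]

theorem norm_add_sub_one_le_one {u v : ℂ} (hu : ‖1 - u‖ ≤ 1) (hv : ‖1 - v‖ ≤ 1)
    (hpar : (u * conj v).im = 0) (h : ‖1 - u‖ * ‖1 - v‖ ≤ 1 - (u * conj v).re) :
    ‖u + v - 1‖ ≤ 1 := by
  rw [norm_le_one_iff_normSq_le_one] at hu hv ⊢
  rcases le_or_gt (u * conj v).re 0 with hm | hm
  · simp only [normSq_apply, mul_re, sub_re, sub_im, add_re, add_im, one_re, one_im,
      conj_re, conj_im] at hu hv hm ⊢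
    nlinarith
  have hv0 : v ≠ 0 := by rintro rfl; simp at hm
  obtain ⟨s, hs, rfl⟩ : ∃ s : ℝ, 0 < s ∧ u = s * v := by
    refine ⟨(u * conj v).re / normSq v, div_pos hm (normSq_pos.mpr hv0), ?_⟩
    have hreal : u * conj v = ((u * conj v).re : ℂ) := Complex.ext (by simp) (by simp [hpar])
    rw [ofReal_div, div_mul_eq_mul_div, ← hreal, mul_assoc, mul_comm (conj v), mul_conj,
      mul_div_assoc, div_self (ofReal_ne_zero.mpr (normSq_pos.mpr hv0).ne'), mul_one]
  have hN : (s * v * conj v).re = s * normSq v := by rw [mul_assoc, mul_conj]; norm_cast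
  have h1 : normSq (1 - s * v) = 1 - 2 * s * v.re + s ^ 2 * normSq v := by
    simp only [normSq_apply, sub_re, sub_im, one_re, one_im, re_ofReal_mul, im_ofReal_mul]; ring
  have h2 : normSq (1 - v) = 1 - 2 * v.re + normSq v := by
    simp only [normSq_apply, sub_re, sub_im, one_re, one_im]; ring
  have h3 : normSq (s * v + v - 1) = 1 - 2 * (1 + s) * v.re + (1 + s) ^ 2 * normSq v := by
    simp only [normSq_apply, sub_re, sub_im, add_re, add_im, one_re, one_im, re_ofReal_mul,
      im_ofReal_mul]; ring
  have hsq := pow_le_pow_left₀ (mul_nonneg (norm_nonneg _) (norm_nonneg _)) h 2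
  simp only [mul_pow, Complex.sq_norm] at hsq
  rw [hN, h1, h2] at hsq
  rw [hN] at h
  have hsN : s * normSq v ≤ 1 := by
    linarith [mul_nonneg (norm_nonneg (1 - s * v)) (norm_nonneg (1 - v))]
  have := add_mul_le_two_mul_of_mul_le_sq hs hsN hsq
  rw [h3]
  nlinarith

noncomputable def ellipseCurve (A B : ℂ) (t : ℝ) : ℂ := 2 - cexp (-t * I) * A - cexp (t * I) * B

theorem ellipseCurve_zero (A B : ℂ) : ellipseCurve A B 0 = 2 - A - B := by
  simp [ellipseCurve]

theorem ellipseCurve_add (A B : ℂ) (s t : ℝ) :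
    ellipseCurve A B (s + t) = ellipseCurve (cexp (-s * I) * A) (cexp (s * I) * B) t := by
  simp only [ellipseCurve, ofReal_add, neg_add, add_mul, Complex.exp_add]
  ring

theorem ellipseCurve_two_mul (A B : ℂ) (θ : ℝ) :
    ellipseCurve A B (2 * θ) =
      ellipseCurve A B 0 + 2 * I * Real.sin θ * (A * cexp (-θ * I) - B * cexp (θ * I)) := by
  have hinv : cexp (θ * I) * cexp (-θ * I) = 1 := by rw [← Complex.exp_add]; simp
  have hsq : ∀ z : ℂ, cexp (2 * z) = cexp z ^ 2 := fun z => by rw [two_mul, Complex.exp_add, sq]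
  have hsin : (Real.sin θ : ℂ) = (cexp (-θ * I) - cexp (θ * I)) * I / 2 := by
    rw [ofReal_sin, Complex.sin]
  have e1 : cexp (-↑(2 * θ) * I) = cexp (-θ * I) ^ 2 := by rw [← hsq]; push_cast; ring_nf
  have e2 : cexp (↑(2 * θ) * I) = cexp (θ * I) ^ 2 := by rw [← hsq]; push_cast; ring_nf
  simp only [ellipseCurve, e1, e2, hsin, ofReal_zero, neg_zero, zero_mul, Complex.exp_zero]
  linear_combination (-(A + B)) * hinv -
    (cexp (-θ * I) - cexp (θ * I)) * (A * cexp (-θ * I) - B * cexp (θ * I)) * I_sq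

theorem re_conj_mul_I_mul (p A B : ℂ) (θ : ℝ) :
    (conj p * (I * (A * cexp (-θ * I) - B * cexp (θ * I)))).re =
      (conj p * A + p * conj B).re * Real.sin θ - (conj p * A + p * conj B).im * Real.cos θ := by
  simp [Complex.exp_re, Complex.exp_im, mul_re, mul_im]
  ring

theorem exists_norm_mul_exp_sub_mul_exp (A B : ℂ) :
    ∃ θ : ℝ, ‖A * cexp (-θ * I) - B * cexp (θ * I)‖ = |‖A‖ - ‖B‖| := by
  set θ := (arg A - arg B) / 2
  refine ⟨θ, ?_⟩
  have h : A * cexp (-θ * I) - B * cexp (θ * I) =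
      ((‖A‖ - ‖B‖ : ℝ) : ℂ) * cexp ((θ + arg B : ℝ) * I) := by
    conv_lhs => rw [← norm_mul_exp_arg_mul_I A, ← norm_mul_exp_arg_mul_I B]
    rw [mul_assoc, mul_assoc, ← Complex.exp_add, ← Complex.exp_add]
    have e1 : (arg A : ℂ) * I + -θ * I = ((θ + arg B : ℝ) : ℂ) * I := by
      simp only [θ]; push_cast; ring
    have e2 : (arg B : ℂ) * I + θ * I = ((θ + arg B : ℝ) : ℂ) * I := by push_cast; ring
    rw [e1, e2]; push_cast; ring
  rw [h, norm_mul, Complex.norm_real, norm_exp_ofReal_mul_I, mul_one, Real.norm_eq_abs]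

theorem re_conj_mul_add_mul_conj_nonneg {A B : ℂ} (hA : ‖A‖ ≤ 1) (hB : ‖B‖ ≤ 1)
    (him : (conj (2 - A - B) * A + (2 - A - B) * conj B).im = 0)
    (hre : 0 ≤ (conj (2 - A - B) * A + (2 - A - B) * conj B).re + (‖A‖ - ‖B‖) ^ 2) :
    0 ≤ (conj (2 - A - B) * A + (2 - A - B) * conj B).re := by
  have hA2 := Complex.sq_norm A
  have hB2 := Complex.sq_norm B
  have hdisk := norm_add_sub_one_le_one (u := 1 - A) (v := 1 - B) (by simpa using hA)
    (by simpa using hB) ?_ ?_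
  -- `W = 2 - ‖A‖² - ‖B‖² - 2 (1 - A) conj (1 - B)` and `Re W = 1 - ‖1 - A - B‖²`
  all_goals
    try rw [norm_le_one_iff_normSq_le_one] at hdisk
    simp only [normSq_apply, mul_re, mul_im, sub_re, sub_im, add_re, add_im, one_re, one_im,
      conj_re, conj_im, re_ofNat, im_ofNat, sub_sub_cancel] at *
    nlinarith

theorem sq_norm_le_re_conj_mul_ellipseCurve {A B : ℂ} (hA : ‖A‖ ≤ 1) (hB : ‖B‖ ≤ 1)
    (hmin : ∀ t, ‖ellipseCurve A B 0‖ ≤ ‖ellipseCurve A B t‖) (t : ℝ) :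
    ‖ellipseCurve A B 0‖ ^ 2 ≤ (conj (ellipseCurve A B 0) * ellipseCurve A B t).re := by
  obtain ⟨him, hk⟩ := eq_zero_and_forall_add_sq_norm_nonneg (by fun_prop)
    (re_conj_mul_I_mul (ellipseCurve A B 0) A B) fun θ => ellipseCurve_two_mul A B θ ▸ hmin (2 * θ)
  obtain ⟨θ, hθ⟩ := exists_norm_mul_exp_sub_mul_exp A B
  have hre := hk θ
  rw [hθ, sq_abs] at hre
  rw [ellipseCurve_zero] at him hre
  have hW := re_conj_mul_add_mul_conj_nonneg hA hB him hre
  rw [← mul_div_cancel₀ t two_ne_zero, ellipseCurve_two_mul, re_conj_mul_add_two_I_mul,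
    re_conj_mul_I_mul, ellipseCurve_zero, him]
  nlinarith [sq_nonneg (Real.sin (t / 2))]

theorem ellipse_separating_halfplane (z₁ z₂ : ℂ)
    (hz₁ : ‖z₁‖ ≤ 1) (hz₂ : ‖z₂‖ ≤ 1)
    (g : ℝ → ℂ)
    (hg : ∀ φ : ℝ, g φ = 2 - Complex.exp (-(φ : ℂ) * Complex.I) * z₁ -
      Complex.exp ((φ : ℂ) * Complex.I) * (starRingEnd ℂ) z₂)
    (ψ : ℝ) (hψ : ∀ φ : ℝ, ‖g ψ‖ ≤ ‖g φ‖) :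
    ∀ φ : ℝ, ‖g ψ‖ ^ 2 ≤ ((starRingEnd ℂ) (g ψ) * g φ).re := by
  have hrot : ∀ t, g (ψ + t) = ellipseCurve (cexp (-ψ * I) * z₁) (cexp (ψ * I) * conj z₂) t :=
    fun t => by rw [hg, ← ellipseCurve_add]; rfl
  have hψ₀ : g ψ = ellipseCurve (cexp (-ψ * I) * z₁) (cexp (ψ * I) * conj z₂) 0 := by
    rw [← hrot, add_zero]
  intro φ
  rw [hψ₀, ← add_sub_cancel ψ φ, hrot]
  refine sq_norm_le_re_conj_mul_ellipseCurve ?_ ?_ (fun t => hψ₀ ▸ hrot t ▸ hψ (ψ + t)) _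
  · rwa [norm_mul, ← ofReal_neg, norm_exp_ofReal_mul_I, one_mul]
  · rwa [norm_mul, norm_exp_ofReal_mul_I, one_mul, norm_conj]
end

section
/- Let 0 < a < 1, θ ∈ ℝ, and let R > 0 satisfy |(1 − R) e^{iθ} + 1/a| = R. Then R ≥ (1/2)(1 + 1/a); consequently 1 + a ≥ 2R/(2R − 1). -/
/-!
Since `e^{iθ}` is a unit vector, the triangle inequality turns the circle condition into
`1/a ≤ R + |1 - R|`. As `1/a > 1`, this rules out `R < 1`, so `1/a ≤ 2R - 1`, which is the first
claim; multiplying out, it is also `2R ≤ (1 + a)(2R - 1)`, the second.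
-/

open Complex

theorem norm_le_add_norm_of_norm_mul_add_eq {𝕜 : Type*} [NormedDivisionRing 𝕜] {z u w : 𝕜}
    {r : ℝ} (hu : ‖u‖ = 1) (h : ‖z * u + w‖ = r) : ‖w‖ ≤ r + ‖z‖ :=
  calc ‖w‖ ≤ ‖z * u + w‖ + ‖w - (z * u + w)‖ := norm_le_norm_add_norm_sub' _ _
    _ = r + ‖z‖ := by rw [h, norm_sub_rev, add_sub_cancel_right, norm_mul, hu, mul_one]

theorem le_two_mul_sub_one_of_le_add_abs_one_sub {x R : ℝ} (hx : 1 < x)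
    (h : x ≤ R + |1 - R|) : x ≤ 2 * R - 1 := by
  rcases le_or_gt R 1 with hR | hR
  · rw [abs_of_nonneg (sub_nonneg.mpr hR)] at h
    linarith
  · rw [abs_of_neg (sub_neg.mpr hR)] at h
    linarith

theorem div_two_mul_sub_one_le_one_add {a R : ℝ} (ha : 0 < a) (h : 1 / a ≤ 2 * R - 1) :
    2 * R / (2 * R - 1) ≤ 1 + a := by
  have hpos : 0 < 2 * R - 1 := (one_div_pos.mpr ha).trans_le h
  have hmul : 1 ≤ a * (2 * R - 1) := (div_le_iff₀' ha).mp h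
  rw [div_le_iff₀ hpos]
  linarith

theorem radius_lower_bound_general (a : ℝ) (ha0 : 0 < a) (ha1 : a < 1) (θ : ℝ)
    (R : ℝ)
    (hcirc : ‖(1 - (R : ℂ)) * Complex.exp ((θ : ℂ) * Complex.I) +
      1 / (a : ℂ)‖ = R) :
    (1 / 2) * (1 + 1 / a) ≤ R ∧ 2 * R / (2 * R - 1) ≤ 1 + a := by
  have htriangle : 1 / a ≤ R + |1 - R| := by
    have h := norm_le_add_norm_of_norm_mul_add_eq (norm_exp_ofReal_mul_I θ) hcirc
    rwa [← ofReal_one, ← ofReal_sub, ← ofReal_div, norm_real, norm_real, Real.norm_eq_abs,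
      Real.norm_eq_abs, abs_of_pos (one_div_pos.mpr ha0)] at h
  have hkey : 1 / a ≤ 2 * R - 1 :=
    le_two_mul_sub_one_of_le_add_abs_one_sub ((one_lt_div ha0).mpr ha1) htriangle
  exact ⟨by linarith, div_two_mul_sub_one_le_one_add ha0 hkey⟩

theorem radius_lower_bound (a : ℝ) (ha0 : 0 < a) (ha1 : a < 1) (θ : ℝ)
    (R : ℝ) (hR : 0 < R)
    (hcirc : ‖(1 - (R : ℂ)) * Complex.exp ((θ : ℂ) * Complex.I) +
      1 / (a : ℂ)‖ = R) :
    (1 / 2) * (1 + 1 / a) ≤ R ∧ 2 * R / (2 * R - 1) ≤ 1 + a :=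
  radius_lower_bound_general a ha0 ha1 θ R hcirc
end
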